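/- arXiv:2205.07349 — 4 statements merged into one kernel-verified Lean document; each statement's English description precedes it below -/
import Mathlib

section
/- Let m ≥ 1 and let F be a polynomial in m variables with rational coefficients that is irreducible over ℚ. Suppose there exists a point p ∈ ℚ^m such that F(p) = 0 and some partial derivative ∂F/∂x_i does not vanish at p (i.e., p is a smooth ℚ-rational point of the hypersurface F = 0). Then the image of F in ℂ[x_1,…,x_m], obtained by applying the inclusion ℚ → ℂ to each coefficient, is irreducible over ℂ. -/
/-
Let `K/k` be Galois and `G` a prime factor of `F` over `K` through the smooth point `p`.
Smoothness means the cofactor `F / G` does not vanish at `p`, so every Galois conjugate of `G`,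
again a prime factor through `p`, is associate to `G`. Normalising one coefficient of `G` to `1`
makes `G` Galois-stable, hence defined over `k`, and irreducibility of `F` forces `F ~ G`.
This gives irreducibility over `ℚ̄`.

Irreducibility over an algebraically closed field `K` survives any field extension `L`: the
coefficients of a factorisation over `L` generate a finitely generated `K`-algebra, which by the
Nullstellensatz has a `K`-point, and specialising along it gives a factorisation over `K`.
-/

open MvPolynomial

theorem UniqueFactorizationMonoid.exists_prime_dvd_of_map_eq_zero {R S F : Type*}
    [CommMonoidWithZero R] [UniqueFactorizationMonoid R] [MonoidWithZero S] [NoZeroDivisors S]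
    [Nontrivial S] [FunLike F R S] [MonoidWithZeroHomClass F R S] (φ : F) {a : R} (ha : a ≠ 0)
    (h : φ a = 0) : ∃ q, Prime q ∧ q ∣ a ∧ φ q = 0 := by
  induction a using UniqueFactorizationMonoid.induction_on_prime with
  | h₁ => exact absurd rfl ha
  | h₂ u hu => exact absurd h (hu.map φ).ne_zero
  | h₃ a q ha0 hq ih =>
    rcases mul_eq_zero.mp ((map_mul φ q a).symm.trans h) with hq0 | ha
    · exact ⟨q, hq, dvd_mul_right q a, hq0⟩
    · obtain ⟨r, hr, hra, hr0⟩ := ih ha0 ha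
      exact ⟨r, hr, hra.mul_left q, hr0⟩

theorem IsAlgClosed.nonempty_algHom_of_finiteType {K A : Type*} [Field K] [IsAlgClosed K]
    [CommRing A] [Nontrivial A] [Algebra K A] [Algebra.FiniteType K A] : Nonempty (A →ₐ[K] K) := by
  obtain ⟨M, hM⟩ := Ideal.exists_maximal A
  let := Ideal.Quotient.field M
  have : Algebra.FiniteType K (A ⧸ M) :=
    .of_surjective (Ideal.Quotient.mkₐ K M) (Ideal.Quotient.mkₐ_surjective K M)
  have := finite_of_finite_type_of_isJacobsonRing K (A ⧸ M)
  let e : K ≃ₐ[K] A ⧸ M := .ofBijective (Algebra.ofId K (A ⧸ M))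
    IsAlgClosed.algebraMap_bijective_of_isIntegral
  exact ⟨e.symm.toAlgHom.comp (Ideal.Quotient.mkₐ K M)⟩

namespace MvPolynomial

variable {σ : Type*}

theorem eval_map_comp {R S : Type*} [CommSemiring R] [CommSemiring S] (f : R →+* S)
    (x : σ → R) (P : MvPolynomial σ R) : eval (f ∘ x) (map f P) = f (eval x P) := by
  rw [eval_map, eval₂_comp]

theorem eval_pderiv_mul_eq_zero {R : Type*} [CommSemiring R] {A B : MvPolynomial σ R}
    {x : σ → R} (hA : eval x A = 0) (hB : eval x B = 0) (i : σ) :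
    eval x (pderiv i (A * B)) = 0 := by
  simp [Derivation.leibniz, hA, hB]

theorem not_isUnit_of_coeff_ne_zero {R : Type*} [CommRing R] [IsReduced R]
    {P : MvPolynomial σ R} {d : σ →₀ ℕ} (hd : d ≠ 0) (h : coeff d P ≠ 0) : ¬IsUnit P := by
  classical
  rw [isUnit_iff_eq_C_of_isReduced]
  rintro ⟨r, -, rfl⟩
  exact h (by rw [coeff_C, if_neg hd.symm])

theorem exists_coeff_ne_zero_of_not_isUnit {K : Type*} [Field K] {P : MvPolynomial σ K}
    (h0 : P ≠ 0) (hu : ¬IsUnit P) : ∃ d ≠ 0, coeff d P ≠ 0 := by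
  classical
  by_contra! h
  have hP : P = C (coeff 0 P) := by
    ext d
    rcases eq_or_ne d 0 with rfl | hd
    · rw [coeff_C, if_pos rfl]
    · rw [coeff_C, if_neg (Ne.symm hd), h d hd]
  refine hu (hP ▸ (Ne.isUnit fun h00 => h0 ?_).map C)
  rw [hP, h00, map_zero]

theorem eq_of_associated_of_coeff_eq_one {R : Type*} [CommRing R] [IsReduced R]
    {P Q : MvPolynomial σ R} (hPQ : Associated P Q) {e : σ →₀ ℕ} (hP : coeff e P = 1)
    (hQ : coeff e Q = 1) : P = Q := by
  obtain ⟨u, rfl⟩ := hPQ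
  obtain ⟨r, -, hr⟩ := isUnit_iff_eq_C_of_isReduced.mp u.isUnit
  rw [hr, mul_comm, coeff_C_mul, hP, mul_one] at hQ
  rw [hr, hQ, C_1, mul_one]

theorem exists_prime_dvd_coeff_eq_one_eval_eq_zero {K : Type*} [Field K]
    {P : MvPolynomial σ K} {x : σ → K} (hP : P ≠ 0) (hx : eval x P = 0) :
    ∃ G e, Prime G ∧ G ∣ P ∧ coeff e G = 1 ∧ eval x G = 0 := by
  obtain ⟨q, hq, hqP, hqx⟩ :=
    UniqueFactorizationMonoid.exists_prime_dvd_of_map_eq_zero (eval x) hP hx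
  obtain ⟨e, he⟩ := support_nonempty.mpr hq.ne_zero
  have hunit : IsUnit (C (coeff e q)⁻¹ : MvPolynomial σ K) :=
    (inv_ne_zero (mem_support_iff.mp he)).isUnit.map C
  refine ⟨C (coeff e q)⁻¹ * q, e, (associated_unit_mul_left q _ hunit).symm.prime hq,
    (associated_unit_mul_left q _ hunit).dvd.trans hqP, ?_, ?_⟩
  · rw [coeff_C_mul, inv_mul_cancel₀ (mem_support_iff.mp he)]
  · rw [map_mul, hqx, mul_zero]

theorem mem_range_map_algebraMap_of_forall_map_eq {k K : Type*} [Field k] [Field K]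
    [Algebra k K] [IsGalois k K] {P : MvPolynomial σ K}
    (h : ∀ g : Gal(K/k), map (g : K →+* K) P = P) : P ∈ Set.range (map (algebraMap k K)) := by
  rw [mem_range_map_iff_coeffs_subset]
  intro c hc
  obtain ⟨e, -, rfl⟩ := mem_coeffs_iff.mp hc
  refine (InfiniteGalois.mem_range_algebraMap_iff_fixed _).mpr fun g => ?_
  exact (coeff_map _ P e).symm.trans (congrArg (coeff e) (h g))

theorem map_prime_factor_eq_self_of_eval_cofactor_ne_zero {K : Type*} [Field K] (f : K ≃+* K)
    {P G H : MvPolynomial σ K} {x : σ → K} (hfx : (f : K →+* K) ∘ x = x)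
    (hfP : map (f : K →+* K) P = P)
    (hGH : P = G * H) (hG : Prime G) (hGx : eval x G = 0) (hHx : eval x H ≠ 0)
    {e : σ →₀ ℕ} (he : coeff e G = 1) : map (f : K →+* K) G = G := by
  have hfG : Prime (map (f : K →+* K) G) := (MulEquiv.prime_iff (mapEquiv σ f)).mpr hG
  have hfGx : eval x (map (f : K →+* K) G) = 0 := by
    rw [← hfx, eval_map_comp, hGx, map_zero]
  have hdvd : map (f : K →+* K) G ∣ G * H :=
    ⟨map (f : K →+* K) H, by rw [← map_mul, ← hGH, hfP]⟩
  have hndvd : ¬map (f : K →+* K) G ∣ H := by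
    rintro ⟨Q, rfl⟩
    exact hHx (by rw [map_mul, hfGx, zero_mul])
  refine eq_of_associated_of_coeff_eq_one
    (hfG.associated_of_dvd hG ((hfG.dvd_or_dvd hdvd).resolve_right hndvd)) ?_ he
  rw [coeff_map, he, map_one]

theorem irreducible_map_algebraMap_of_eval_pderiv_ne_zero {k K : Type*} [Field k] [Field K]
    [Algebra k K] [IsGalois k K] {F : MvPolynomial σ k} (hF : Irreducible F) {p : σ → k}
    (hp : eval p F = 0) {i : σ} (hi : eval p (pderiv i F) ≠ 0) :
    Irreducible (map (algebraMap k K) F) := by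
  set φ := algebraMap k K
  have hφ : Function.Injective φ := φ.injective
  have hFK : map φ F ≠ 0 := fun h => hF.ne_zero (map_injective φ hφ (by rw [h, map_zero]))
  have hFKp : eval (φ ∘ p) (map φ F) = 0 := by rw [eval_map_comp, hp, map_zero]
  obtain ⟨G, e, hG, ⟨H, hGH⟩, he, hGp⟩ := exists_prime_dvd_coeff_eq_one_eval_eq_zero hFK hFKp
  have hHp : eval (φ ∘ p) H ≠ 0 := fun hHp => hi <| hφ <| by
    rw [map_zero, ← eval_map_comp, ← pderiv_map, hGH, eval_pderiv_mul_eq_zero hGp hHp]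
  have hfix : ∀ g : Gal(K/k), map (g : K →+* K) (map φ F) = map φ F := fun g => by
    rw [map_map, show (g : K →+* K).comp φ = φ from RingHom.ext g.commutes]
  have hGfix : ∀ g : Gal(K/k), map (g : K →+* K) G = G := fun g =>
    map_prime_factor_eq_self_of_eval_cofactor_ne_zero (g : K ≃+* K)
      (by ext j; exact g.commutes (p j)) (hfix g) hGH hG hGp hHp he
  have hHfix : ∀ g : Gal(K/k), map (g : K →+* K) H = H := fun g =>
    mul_left_cancel₀ hG.ne_zero <| by rw [← hGH, ← hGfix g, ← map_mul, ← hGH, hfix g]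
  obtain ⟨G₀, rfl⟩ := mem_range_map_algebraMap_of_forall_map_eq hGfix
  obtain ⟨H₀, rfl⟩ := mem_range_map_algebraMap_of_forall_map_eq hHfix
  rcases hF.isUnit_or_isUnit (map_injective φ hφ (by rw [hGH, map_mul])) with hu | hu
  · exact absurd (hu.map (map φ)) hG.not_isUnit
  · exact hGH ▸ (associated_mul_unit_right _ _ (hu.map (map φ))).irreducible hG.irreducible

theorem not_isUnit_map_of_isUnit_coeff {R K : Type*} [CommRing R] [Field K] (ψ : R →+* K)
    {P : MvPolynomial σ R} {d : σ →₀ ℕ} (hd : d ≠ 0) (h : IsUnit (coeff d P)) :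
    ¬IsUnit (map ψ P) :=
  not_isUnit_of_coeff_ne_zero hd (by rw [coeff_map]; exact (h.map ψ).ne_zero)

theorem exists_map_val_eq_and_isUnit_coeff {K L : Type*} [Field K] [Field L] [Algebra K L]
    (R : Subalgebra K L) {A : MvPolynomial σ L} (hA : (A.coeffs : Set L) ⊆ R) {d : σ →₀ ℕ}
    (hd : coeff d A ≠ 0) (hinv : (coeff d A)⁻¹ ∈ R) :
    ∃ A' : MvPolynomial σ R, map (R.val : R →+* L) A' = A ∧ IsUnit (coeff d A') := by
  obtain ⟨A', hA'⟩ : A ∈ Set.range (map (R.val : R →+* L)) := by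
    rw [mem_range_map_iff_coeffs_subset]
    exact fun c hc => ⟨⟨c, hA hc⟩, rfl⟩
  refine ⟨A', hA', IsUnit.of_mul_eq_one ⟨_, hinv⟩ (Subtype.ext ?_)⟩
  show ((coeff d A' : R) : L) * (coeff d A)⁻¹ = 1
  rw [← hA', coeff_map] at hd ⊢
  exact mul_inv_cancel₀ hd

theorem exists_mul_eq_not_isUnit_of_map_eq_mul {K L : Type*} [Field K] [IsAlgClosed K]
    [Field L] [Algebra K L] {G : MvPolynomial σ K} {A B : MvPolynomial σ L}
    (hAB : map (algebraMap K L) G = A * B) (hA : ¬IsUnit A) (hB : ¬IsUnit B)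
    (hG : G ≠ 0) : ∃ A' B', G = A' * B' ∧ ¬IsUnit A' ∧ ¬IsUnit B' := by
  classical
  have hGL : map (algebraMap K L) G ≠ 0 :=
    fun h => hG (map_injective _ (algebraMap K L).injective (by rw [h, map_zero]))
  obtain ⟨dA, hdA, hAd⟩ := exists_coeff_ne_zero_of_not_isUnit (left_ne_zero_of_mul (hAB ▸ hGL)) hA
  obtain ⟨dB, hdB, hBd⟩ := exists_coeff_ne_zero_of_not_isUnit (right_ne_zero_of_mul (hAB ▸ hGL)) hB
  let S : Finset L := A.coeffs ∪ B.coeffs ∪ {(coeff dA A)⁻¹, (coeff dB B)⁻¹}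
  let R := Algebra.adjoin K (S : Set L)
  have hS : (S : Set L) ⊆ R := Algebra.subset_adjoin
  have : Algebra.FiniteType K R := .adjoin_of_finite S.finite_toSet
  obtain ⟨ψ⟩ := IsAlgClosed.nonempty_algHom_of_finiteType (K := K) (A := R)
  obtain ⟨A', hA'A, hA'⟩ := exists_map_val_eq_and_isUnit_coeff R
    (fun c hc => hS (by simp [S, Finset.mem_coe.mp hc])) hAd (hS (by simp [S]))
  obtain ⟨B', hB'B, hB'⟩ := exists_map_val_eq_and_isUnit_coeff R
    (fun c hc => hS (by simp [S, Finset.mem_coe.mp hc])) hBd (hS (by simp [S]))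
  have hA'B' : A' * B' = map (algebraMap K R) G := by
    refine map_injective (R.val : R →+* L) Subtype.val_injective ?_
    rw [map_mul, hA'A, hB'B, ← hAB, map_map]
    rfl
  refine ⟨map (ψ : R →+* K) A', map (ψ : R →+* K) B', ?_,
    not_isUnit_map_of_isUnit_coeff _ hdA hA', not_isUnit_map_of_isUnit_coeff _ hdB hB'⟩
  rw [← map_mul, hA'B', map_map, ψ.comp_algebraMap, Algebra.algebraMap_self, map_id]

theorem irreducible_map_of_isAlgClosed {K L : Type*} [Field K] [IsAlgClosed K] [Field L]
    (ι : K →+* L) {G : MvPolynomial σ K} (hG : Irreducible G) : Irreducible (map ι G) := by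
  let := ι.toAlgebra
  refine ⟨fun hu => ?_, fun A B hAB => ?_⟩
  · obtain ⟨d, hd, hGd⟩ := exists_coeff_ne_zero_of_not_isUnit hG.ne_zero hG.not_isUnit
    exact not_isUnit_of_coeff_ne_zero hd (by rwa [coeff_map, map_ne_zero]) hu
  · by_contra! h
    obtain ⟨G₁, G₂, hG₁₂, hG₁, hG₂⟩ :=
      exists_mul_eq_not_isUnit_of_map_eq_mul hAB h.1 h.2 hG.ne_zero
    rcases hG.isUnit_or_isUnit hG₁₂ with hu | hu
    exacts [hG₁ hu, hG₂ hu]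

end MvPolynomial

theorem smooth_rational_point_upgrades_irreducibility_general
    (m : ℕ) (F : MvPolynomial (Fin m) ℚ)
    (hF : Irreducible F)
    (p : Fin m → ℚ) (hp : eval p F = 0)
    (hsmooth : ∃ i : Fin m, eval p (pderiv i F) ≠ 0) :
    Irreducible (MvPolynomial.map (algebraMap ℚ ℂ) F) := by
  obtain ⟨i, hi⟩ := hsmooth
  -- `algebraMap ℚ (AlgebraicClosure ℚ)` is found through `DivisionRing.toRatAlgebra`, which
  -- agrees with the algebra of `AlgebraicClosure.instIsAlgClosure` only up to unfolding.
  have : IsGalois ℚ (AlgebraicClosure ℚ) :=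
    @IsAlgClosure.isGalois _ _ _ _ _ (AlgebraicClosure.instIsAlgClosure ℚ) _
  have hQbar : Irreducible (map (algebraMap ℚ (AlgebraicClosure ℚ)) F) :=
    irreducible_map_algebraMap_of_eval_pderiv_ne_zero hF hp hi
  let ι : AlgebraicClosure ℚ →ₐ[ℚ] ℂ := IsAlgClosed.lift
  simpa only [map_map, AlgHom.toRingHom_eq_coe, AlgHom.comp_algebraMap_of_tower] using
    irreducible_map_of_isAlgClosed (ι : AlgebraicClosure ℚ →+* ℂ) hQbar

/-- If `F ∈ ℚ[x_1,…,x_m]` is irreducible over `ℚ` and the hypersurface `F = 0` has a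
smooth `ℚ`-rational point `p`, then the image of `F` in `ℂ[x_1,…,x_m]` is irreducible
over `ℂ`. -/
theorem smooth_rational_point_upgrades_irreducibility
    (m : ℕ) (hm : 1 ≤ m) (F : MvPolynomial (Fin m) ℚ)
    (hF : Irreducible F)
    (p : Fin m → ℚ) (hp : eval p F = 0)
    (hsmooth : ∃ i : Fin m, eval p (pderiv i F) ≠ 0) :
    Irreducible (MvPolynomial.map (algebraMap ℚ ℂ) F) :=
  smooth_rational_point_upgrades_irreducibility_general m F hF p hp hsmooth
end

section
/- Let m ≥ 1, let F be a polynomial in m variables with complex coefficients, and let p ∈ ℂ^m be a point at which some partial derivative ∂F/∂x_i does not vanish. If G and H are irreducible factors of F with G(p) = 0 and H(p) = 0, then G and H are associates (each divides the other up to a unit). -/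
open MvPolynomial

/-- A smooth point can lie on at most one `ℂ`-irreducible component: if some partial
derivative of `F` does not vanish at `p`, then any two irreducible factors of `F`
vanishing at `p` are associates. -/
theorem smooth_point_on_at_most_one_component
    (m : ℕ) (hm : 1 ≤ m) (F : MvPolynomial (Fin m) ℂ)
    (p : Fin m → ℂ)
    (hsmooth : ∃ i : Fin m, eval p (pderiv i F) ≠ 0)
    (G H : MvPolynomial (Fin m) ℂ)
    (hG : Irreducible G) (hGdvd : G ∣ F) (hGp : eval p G = 0)
    (hH : Irreducible H) (hHdvd : H ∣ F) (hHp : eval p H = 0) :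
    Associated G H := by
  by_contra hne
  obtain ⟨A, hA⟩ := hGdvd
  have hHdA : H ∣ A := by
    rcases hH.prime.dvd_mul.mp (hA ▸ hHdvd) with h | h
    · exact absurd (hH.associated_of_dvd hG h).symm hne
    · exact h
  obtain ⟨B, hB⟩ := hHdA
  obtain ⟨i, hi⟩ := hsmooth
  apply hi
  rw [hA, hB, pderiv_mul, pderiv_mul]
  simp [hGp, hHp]
end

section
/- Let N ≥ 2 and let R = ℂ[[s_0,…,s_{N−1}]] be the ring of formal power series in N variables over ℂ. Suppose that for each i with 0 ≤ i ≤ N−2 we are given units α_i and β_i of R, and let I be the ideal of R generated by the N−1 elements α_i·s_i − β_i·s_{i+1}. Then the quotient ring R/I is a discrete valuation ring, and for every j with 0 ≤ j ≤ N−1 the image of the variable s_j in R/I is nonzero and is not a unit. -/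
/-!
Put `γ i = α i⁻¹ * β i`, so that the relations read `s i = γ i * s (i + 1)`. Looking for a formal
curve `φ` in one variable `t` on which they hold, the unrolled recursion
`φ j = t * ∏_{i ≥ j} γ i(φ)` is a `t`-adic contraction; its fixed point satisfies
`φ i = γ i(φ) * φ (i + 1)`, and every `φ j` is a nonzero series of positive order. Substituting
`φ` gives a ring map `π : R ⧸ I → k⟦t⟧`.

In the Noetherian local ring `R ⧸ I` each variable is a multiple of `s (N - 1)`, so the maximal
ideal is principal, generated by `s (N - 1)`. By Krull's intersection theorem every nonzero element
is then a unit times a power of `s (N - 1)`, and `π` sends it to a nonzero series. So `π` is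
injective, `R ⧸ I` is a domain, and a Noetherian local domain whose maximal ideal is nonzero and
principal is a discrete valuation ring.
-/

open MvPowerSeries IsLocalRing

namespace MvPowerSeries

variable {σ R : Type*} [CommRing R]

theorem mem_span_range_X_of_constantCoeff_eq_zero [Finite σ] {f : MvPowerSeries σ R}
    (hf : constantCoeff f = 0) : f ∈ Ideal.span (Set.range X) := by
  classical
  cases nonempty_fintype σ
  obtain ⟨restrict, hrestrict⟩ : ∃ restrict : Finset σ → MvPowerSeries σ R, ∀ S e,
      coeff e (restrict S) = if ∀ s ∈ S, e s = 0 then coeff e f else 0 :=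
    ⟨fun S e => if ∀ s ∈ S, e s = 0 then coeff e f else 0, fun _ _ => rfl⟩
  have hsub : ∀ S, f - restrict S ∈ Ideal.span (Set.range X) := by
    intro S
    induction S using Finset.induction_on with
    | empty => simp [show restrict ∅ = f by ext; simp [hrestrict]]
    | insert t S ht ih =>
      have hdvd : X t ∣ restrict S - restrict (insert t S) := X_dvd_iff.mpr fun e he => by
        simp [hrestrict, he]
      have hmem := Ideal.span_mono (Set.singleton_subset_iff.mpr (Set.mem_range_self t))
        (Ideal.mem_span_singleton.mpr hdvd)
      simpa using add_mem ih hmem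
  have huniv : restrict Finset.univ = 0 := by
    ext e
    rw [hrestrict, map_zero, ite_eq_right_iff]
    intro he
    rw [show e = 0 from Finsupp.ext fun s => he s (Finset.mem_univ s),
      coeff_zero_eq_constantCoeff_apply, hf]
  simpa [huniv] using hsub Finset.univ

theorem maximalIdeal_eq_span_range_X {k : Type*} [Field k] [Finite σ] :
    maximalIdeal (MvPowerSeries σ k) = Ideal.span (Set.range X) := by
  refine le_antisymm (fun f hf => mem_span_range_X_of_constantCoeff_eq_zero ?_) ?_
  · simpa [isUnit_iff_constantCoeff] using hf
  · rw [Ideal.span_le]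
    rintro _ ⟨s, rfl⟩
    simp [isUnit_iff_constantCoeff]

theorem X_pow_dvd_subst_sub_subst {a b : σ → PowerSeries R} (ha : HasSubst a) (hb : HasSubst b)
    {m : ℕ} (hab : ∀ s, PowerSeries.X ^ m ∣ a s - b s) (f : MvPowerSeries σ R) :
    PowerSeries.X ^ m ∣ subst a f - subst b f := by
  have hprod (e : σ →₀ ℕ) :
      PowerSeries.X ^ m ∣ (e.prod fun s n => a s ^ n) - e.prod fun s n => b s ^ n := by
    simp only [← Ideal.mem_span_singleton, ← Ideal.Quotient.eq, Finsupp.prod, map_prod, map_pow,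
      Ideal.Quotient.eq.mpr (Ideal.mem_span_singleton.mpr (hab _))]
  refine PowerSeries.X_pow_dvd_iff.mpr fun d hd => ?_
  simp only [map_sub, sub_eq_zero, ← PowerSeries.coeff_coeToMvPowerSeries, coeff_subst ha,
    coeff_subst hb]
  exact finsum_congr fun e =>
    congrArg _ (sub_eq_zero.mp (PowerSeries.X_pow_dvd_iff.mp (hprod e) d hd))

end MvPowerSeries

namespace PowerSeries

variable {ι R : Type*} [CommRing R]

theorem eq_of_forall_X_pow_dvd_sub {f g : R⟦X⟧} (h : ∀ m, X ^ m ∣ f - g) : f = g := by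
  ext d
  simpa [sub_eq_zero] using X_pow_dvd_iff.mp (h (d + 1)) d (Nat.lt_succ_self d)

theorem exists_fixedPoint_of_contracting (Φ : (ι → R⟦X⟧) → ι → R⟦X⟧)
    (hΦ₀ : ∀ ψ i, constantCoeff (Φ ψ i) = 0)
    (hΦ : ∀ m ψ ψ', (∀ i, constantCoeff (ψ i) = 0) → (∀ i, constantCoeff (ψ' i) = 0) →
      (∀ i, X ^ m ∣ ψ i - ψ' i) → ∀ i, X ^ (m + 1) ∣ Φ ψ i - Φ ψ' i) :
    ∃ φ, Φ φ = φ := by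
  let ψ (k : ℕ) : ι → R⟦X⟧ := Φ^[k + 1] 0
  have hψ_succ (k : ℕ) : ψ (k + 1) = Φ (ψ k) := Function.iterate_succ_apply' ..
  have hψ₀ (k : ℕ) : ∀ i, constantCoeff (ψ k i) = 0 := by
    simp only [ψ, Function.iterate_succ_apply', hΦ₀, implies_true]
  have hstep (k : ℕ) : ∀ i, X ^ k ∣ ψ (k + 1) i - ψ k i := by
    induction k with
    | zero => simp
    | succ k ih => simpa only [hψ_succ] using hΦ k _ _ (hψ₀ _) (hψ₀ _) ih
  have hcauchy {k j : ℕ} (hkj : k ≤ j) (i : ι) : X ^ k ∣ ψ j i - ψ k i := by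
    induction j, hkj using Nat.le_induction with
    | base => simp
    | succ j hkj ih => simpa using dvd_add ((pow_dvd_pow X hkj).trans (hstep j i)) ih
  let φ (i : ι) : R⟦X⟧ := mk fun d => coeff d (ψ (d + 1) i)
  have hφ (k : ℕ) (i : ι) : X ^ k ∣ φ i - ψ k i := by
    refine X_pow_dvd_iff.mpr fun d hd => ?_
    rw [map_sub, coeff_mk, sub_eq_zero, eq_comm, ← sub_eq_zero]
    exact X_pow_dvd_iff.mp (hcauchy hd i) d (Nat.lt_succ_self d)
  have hφ₀ (i : ι) : constantCoeff (φ i) = 0 := by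
    have := X_dvd_iff.mp (by simpa using hφ 1 i)
    rwa [map_sub, hψ₀, sub_zero] at this
  refine ⟨φ, funext fun i => eq_of_forall_X_pow_dvd_sub fun m => ?_⟩
  have h1 := hΦ m _ _ hφ₀ (hψ₀ m) (hφ m) i
  rw [← hψ_succ] at h1
  have h2 := dvd_sub h1 (hφ (m + 1) i)
  rw [sub_sub_sub_cancel_right] at h2
  exact (pow_dvd_pow X m.le_succ).trans h2

end PowerSeries

theorem IsLocalRing.injective_of_maximalIdeal_eq_span_singleton {A B : Type*} [CommRing A]
    [IsNoetherianRing A] [IsLocalRing A] [CommRing B] [IsDomain B] {τ : A}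
    (hτ : maximalIdeal A = Ideal.span {τ}) (f : A →+* B) (hfτ : f τ ≠ 0) :
    Function.Injective f := by
  refine (injective_iff_map_eq_zero f).mpr fun x hx => ?_
  by_contra hx0
  -- Krull's intersection theorem
  have hex : ∃ n, x ∉ maximalIdeal A ^ n := by
    by_contra! h
    exact hx0 (by simpa [Ideal.iInf_pow_eq_bot_of_isLocalRing _ (maximalIdeal.isMaximal A).ne_top]
      using Ideal.mem_iInf.mpr h)
  obtain ⟨n, hn⟩ : ∃ n, x ∈ maximalIdeal A ^ n ∧ x ∉ maximalIdeal A ^ (n + 1) := by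
    obtain ⟨n, hn⟩ := hex
    induction n with
    | zero => simp at hn
    | succ n ih =>
      by_cases h : x ∈ maximalIdeal A ^ n
      · exact ⟨n, h, hn⟩
      · exact ih h
  obtain ⟨y, rfl⟩ :=
    Ideal.mem_span_singleton'.mp (by simpa [hτ, Ideal.span_singleton_pow] using hn.1)
  have hy : IsUnit y := by
    by_contra hy
    refine hn.2 ?_
    rw [pow_succ', hτ, Ideal.span_singleton_pow]
    exact Ideal.mul_mem_mul (hτ ▸ (mem_maximalIdeal y).mpr hy) (Ideal.mem_span_singleton_self _)
  simp [hfτ, (hy.map f).ne_zero] at hx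

section Chain

variable {n : ℕ}

theorem exists_chain_curve {R : Type*} [CommRing R] [IsDomain R]
    (γ : Fin n → MvPowerSeries (Fin (n + 1)) R) (hγ : ∀ i, IsUnit (γ i)) :
    ∃ φ : Fin (n + 1) → PowerSeries R, (∀ j, PowerSeries.constantCoeff (φ j) = 0) ∧
      (∀ j, φ j ≠ 0) ∧ ∀ i, φ i.castSucc = subst φ (γ i) * φ i.succ := by
  -- The recursion, unrolled; the factor `X` makes it an `X`-adic contraction.
  let Φ (ψ : Fin (n + 1) → PowerSeries R) (j : Fin (n + 1)) : PowerSeries R :=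
    PowerSeries.X * ∏ i with j ≤ i.castSucc, subst ψ (γ i)
  obtain ⟨φ, hφ⟩ := PowerSeries.exists_fixedPoint_of_contracting Φ (fun ψ j => by simp [Φ])
    fun m ψ ψ' hψ hψ' hψψ' j => by
      rw [pow_succ', ← mul_sub]
      refine mul_dvd_mul_left _ ?_
      simp only [← Ideal.mem_span_singleton, ← Ideal.Quotient.eq, map_prod]
      refine Finset.prod_congr rfl fun i _ =>
        Ideal.Quotient.eq.mpr (Ideal.mem_span_singleton.mpr ?_)
      exact X_pow_dvd_subst_sub_subst (hasSubst_of_constantCoeff_zero hψ)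
        (hasSubst_of_constantCoeff_zero hψ') hψψ' _
  have hφ_eq (j : Fin (n + 1)) : φ j = Φ φ j := congrFun hφ.symm j
  have hφ₀ (j : Fin (n + 1)) : PowerSeries.constantCoeff (φ j) = 0 := by
    simp [hφ_eq j, Φ]
  have hunit (i : Fin n) : IsUnit (subst φ (γ i)) := by
    simpa [coe_substAlgHom] using (hγ i).map (substAlgHom (hasSubst_of_constantCoeff_zero hφ₀))
  refine ⟨φ, hφ₀, fun j => ?_, fun i => ?_⟩
  · rw [hφ_eq j]
    exact mul_ne_zero PowerSeries.X_ne_zero (IsUnit.prod_iff.mpr fun i _ => hunit i).ne_zero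
  · have hsplit : Finset.univ.filter (fun l : Fin n => i.castSucc ≤ l.castSucc) =
        insert i (Finset.univ.filter fun l => i.succ ≤ l.castSucc) := by
      ext l
      simp only [Finset.mem_filter, Finset.mem_univ, true_and, Finset.mem_insert,
        Fin.castSucc_le_castSucc_iff, Fin.succ_le_castSucc_iff]
      exact le_iff_eq_or_lt.trans (or_congr_left eq_comm)
    rw [hφ_eq i.castSucc, hφ_eq i.succ]
    simp only [Φ]
    rw [hsplit, Finset.prod_insert (by simp)]
    ring

variable {k : Type*} [Field k]

noncomputable def chainIdeal (α β : Fin n → MvPowerSeries (Fin (n + 1)) k) :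
    Ideal (MvPowerSeries (Fin (n + 1)) k) :=
  Ideal.span (Set.range fun i => α i * X i.castSucc - β i * X i.succ)

variable {α β : Fin n → MvPowerSeries (Fin (n + 1)) k}

theorem mk_X_mem_span_mk_X_last (hα : ∀ i, IsUnit (α i)) (j : Fin (n + 1)) :
    Ideal.Quotient.mk (chainIdeal α β) (X j) ∈
      Ideal.span {Ideal.Quotient.mk (chainIdeal α β) (X (Fin.last n))} := by
  induction j using Fin.reverseInduction with
  | last => exact Ideal.mem_span_singleton_self _
  | cast i ih =>
    have hrel : Ideal.Quotient.mk (chainIdeal α β) (α i * X i.castSucc - β i * X i.succ) = 0 :=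
      Ideal.Quotient.eq_zero_iff_mem.mpr (Ideal.subset_span ⟨i, rfl⟩)
    rw [map_sub, map_mul, map_mul, sub_eq_zero] at hrel
    rw [Ideal.mem_span_singleton] at ih ⊢
    rw [← ((hα i).map (Ideal.Quotient.mk (chainIdeal α β))).dvd_mul_left, hrel]
    exact dvd_mul_of_dvd_right ih _

theorem exists_hom_quotient_chainIdeal (hα : ∀ i, IsUnit (α i)) (hβ : ∀ i, IsUnit (β i)) :
    ∃ π : MvPowerSeries (Fin (n + 1)) k ⧸ chainIdeal α β →+* PowerSeries k, ∀ j,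
      π (Ideal.Quotient.mk _ (X j)) ≠ 0 ∧
        PowerSeries.constantCoeff (π (Ideal.Quotient.mk _ (X j))) = 0 := by
  let γ (i : Fin n) : MvPowerSeries (Fin (n + 1)) k := ↑(hα i).unit⁻¹ * β i
  obtain ⟨φ, hφ₀, hφ_ne, hφ_rec⟩ :=
    exists_chain_curve γ fun i => (hα i).unit⁻¹.isUnit.mul (hβ i)
  have hsubst : HasSubst φ := hasSubst_of_constantCoeff_zero hφ₀
  let π : MvPowerSeries (Fin (n + 1)) k →+* PowerSeries k := (substAlgHom hsubst).toRingHom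
  have hπ_apply (f : MvPowerSeries (Fin (n + 1)) k) : π f = subst φ f := by simp [π]
  have hπX (j : Fin (n + 1)) : π (X j) = φ j := by rw [hπ_apply, subst_X hsubst]
  have hπ : chainIdeal α β ≤ RingHom.ker π := by
    rw [chainIdeal, Ideal.span_le]
    rintro _ ⟨i, rfl⟩
    have hαγ : π (α i) * π (γ i) = π (β i) := by
      rw [← map_mul, ← mul_assoc, IsUnit.mul_val_inv, one_mul]
    rw [SetLike.mem_coe, RingHom.mem_ker, map_sub, map_mul, map_mul, hπX, hπX, hφ_rec,
      ← hπ_apply]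
    linear_combination φ i.succ * hαγ
  refine ⟨Ideal.Quotient.lift _ π fun _ ha => RingHom.mem_ker.mp (hπ ha), fun j => ?_⟩
  rw [Ideal.Quotient.lift_mk, hπX]
  exact ⟨hφ_ne j, hφ₀ j⟩

theorem isDiscreteValuationRing_quotient_chainIdeal (hα : ∀ i, IsUnit (α i))
    (hβ : ∀ i, IsUnit (β i)) :
    (∃ _ : IsDomain (MvPowerSeries (Fin (n + 1)) k ⧸ chainIdeal α β),
        IsDiscreteValuationRing (MvPowerSeries (Fin (n + 1)) k ⧸ chainIdeal α β)) ∧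
      ∀ j, Ideal.Quotient.mk (chainIdeal α β) (X j) ≠ 0 ∧
        ¬ IsUnit (Ideal.Quotient.mk (chainIdeal α β) (X j)) := by
  set A := MvPowerSeries (Fin (n + 1)) k ⧸ chainIdeal α β
  set τ : A := Ideal.Quotient.mk _ (X (Fin.last n))
  obtain ⟨π, hπ⟩ := exists_hom_quotient_chainIdeal hα hβ
  have hX_ne (j : Fin (n + 1)) : Ideal.Quotient.mk (chainIdeal α β) (X j) ≠ 0 := fun h =>
    (hπ j).1 (by rw [h, map_zero])
  have hX_nonunit (j : Fin (n + 1)) : ¬ IsUnit (Ideal.Quotient.mk (chainIdeal α β) (X j)) :=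
    fun h => by simpa [PowerSeries.isUnit_iff_constantCoeff, (hπ j).2] using h.map π
  have : Nontrivial A := nontrivial_of_ne _ _ (hX_ne (Fin.last n))
  have : IsLocalRing A := .of_surjective' _ Ideal.Quotient.mk_surjective
  have hmax : maximalIdeal A = Ideal.span {τ} := by
    refine le_antisymm ?_ ((Ideal.span_singleton_le_iff_mem _).mpr
      ((mem_maximalIdeal _).mpr (hX_nonunit _)))
    rw [← map_maximalIdeal_of_surjective _ Ideal.Quotient.mk_surjective,
      maximalIdeal_eq_span_range_X, Ideal.map_span, Ideal.span_le]
    rintro _ ⟨_, ⟨j, rfl⟩, rfl⟩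
    exact mk_X_mem_span_mk_X_last hα j
  have : IsDomain A := (injective_of_maximalIdeal_eq_span_singleton hmax π (hπ _).1).isDomain
  have hnot_field : ¬ IsField A := by
    rw [isField_iff_maximalIdeal_eq, hmax, Ideal.span_singleton_eq_bot]
    exact hX_ne _
  have hprincipal : (maximalIdeal A).IsPrincipal := ⟨⟨τ, hmax⟩⟩
  exact ⟨⟨this, ((IsDiscreteValuationRing.TFAE A hnot_field).out 0 4).mpr hprincipal⟩,
    fun j => ⟨hX_ne j, hX_nonunit j⟩⟩

end Chain

/-- In `R = ℂ[[s_0,…,s_{N-1}]]`, the ideal generated by `α_i s_i - β_i s_{i+1}`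
(for units `α_i, β_i`, `0 ≤ i ≤ N-2`) cuts out a discrete valuation ring, in which
the image of each variable `s_j` is nonzero and not a unit. -/
theorem power_series_quotient_is_dvr
    (N : ℕ) (hN : 2 ≤ N)
    (α β : Fin (N - 1) → MvPowerSeries (Fin N) ℂ)
    (hα : ∀ i, IsUnit (α i)) (hβ : ∀ i, IsUnit (β i))
    (I : Ideal (MvPowerSeries (Fin N) ℂ))
    (hI : I = Ideal.span (Set.range fun i : Fin (N - 1) =>
      α i * X (Fin.cast (Nat.succ_pred_eq_of_pos (by omega : 0 < N)) i.castSucc)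
        - β i * X (Fin.cast (Nat.succ_pred_eq_of_pos (by omega : 0 < N)) i.succ))) :
    (∃ _ : IsDomain (MvPowerSeries (Fin N) ℂ ⧸ I),
        IsDiscreteValuationRing (MvPowerSeries (Fin N) ℂ ⧸ I)) ∧
      ∀ j : Fin N, Ideal.Quotient.mk I (X j) ≠ 0 ∧ ¬ IsUnit (Ideal.Quotient.mk I (X j)) := by
  obtain ⟨n, rfl⟩ : ∃ n, N = n + 1 := ⟨N - 1, by omega⟩
  obtain rfl : I = chainIdeal α β := hI
  exact isDiscreteValuationRing_quotient_chainIdeal hα hβ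
end

section
/- For every integer n ≥ 1 there exists a nonzero polynomial G in one variable with rational coefficients such that for every complex number c, G(c) = 0 if and only if the point 0 is periodic with exact (minimal) period n under the map f_c : ℂ → ℂ, f_c(z) = z² + c. -/
open Polynomial

/-- The iterate polynomials: `gP k` evaluated at `c` is `f_c^[k] 0`. -/
noncomputable def gP : ℕ → Polynomial ℚ
  | 0 => 0
  | k + 1 => gP k ^ 2 + X

lemma gP_aeval (c : ℂ) : ∀ k, Polynomial.aeval c (gP k) = (fun z : ℂ => z ^ 2 + c)^[k] 0
  | 0 => by simp [gP]
  | k + 1 => by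
      rw [Function.iterate_succ_apply']
      simp [gP, gP_aeval c k]

lemma gP_one_le : ∀ k, 1 ≤ k → 1 ≤ Polynomial.aeval (1 : ℚ) (gP k)
  | 1, _ => by simp [gP]
  | k + 2, _ => by
      have h := gP_one_le (k + 1) (by omega)
      simp only [gP, map_add, map_pow, aeval_X]
      nlinarith

lemma gP_ne_zero {k : ℕ} (hk : 1 ≤ k) : gP k ≠ 0 := by
  intro h
  have := gP_one_le k hk
  rw [h] at this
  norm_num at this

/-- The `n`-th Gleason polynomial exists: a nonzero `G ∈ ℚ[c]` whose complex roots are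
exactly the parameters `c` for which the critical point `0` is periodic of exact period
`n` under `f_c(z) = z² + c`. -/
theorem exists_gleason_polynomial (n : ℕ) (hn : 1 ≤ n) :
    ∃ G : Polynomial ℚ, G ≠ 0 ∧ ∀ c : ℂ,
      Polynomial.aeval c G = 0 ↔
        Function.minimalPeriod (fun z : ℂ => z ^ 2 + c) 0 = n := by
  classical
  set P : Polynomial ℚ := gP n with hP
  set Q : Polynomial ℚ := ∏ d ∈ n.properDivisors, gP d with hQ
  have hPne : P ≠ 0 := gP_ne_zero hn
  have hQaeval : ∀ c : ℂ, Polynomial.aeval c Q = 0 ↔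
      ∃ d ∈ n.properDivisors, Polynomial.aeval c (gP d) = 0 := by
    intro c
    rw [hQ, map_prod]
    exact Finset.prod_eq_zero_iff
  -- characterization of minimal period n
  have key : ∀ c : ℂ, Function.minimalPeriod (fun z : ℂ => z ^ 2 + c) 0 = n ↔
      (Polynomial.aeval c P = 0 ∧ Polynomial.aeval c Q ≠ 0) := by
    intro c
    set f : ℂ → ℂ := fun z => z ^ 2 + c with hf
    constructor
    · intro h
      constructor
      · rw [hP, gP_aeval c n]
        conv_lhs => rw [← h]
        exact Function.iterate_minimalPeriod
      · intro hq
        obtain ⟨d, hd, hd0⟩ := (hQaeval c).mp hq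
        have hdn : d < n := (Nat.mem_properDivisors.mp hd).2
        have hdpos : 0 < d := Nat.pos_of_mem_properDivisors hd
        have hper : Function.IsPeriodicPt f d 0 := by
          have := gP_aeval c d
          rw [hd0] at this
          exact (this.symm : f^[d] 0 = 0)
        have := hper.minimalPeriod_le hdpos
        omega
    · rintro ⟨h1, h2⟩
      have hper : Function.IsPeriodicPt f n 0 := by
        have := gP_aeval c n
        rw [hP] at h1
        rw [h1] at this
        exact (this.symm : f^[n] 0 = 0)
      have hdvd := hper.minimalPeriod_dvd
      have hpos : 0 < Function.minimalPeriod f 0 := hper.minimalPeriod_pos hn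
      by_contra hne
      have hlt : Function.minimalPeriod f 0 < n :=
        lt_of_le_of_ne (Nat.le_of_dvd hn hdvd) hne
      have hmem : Function.minimalPeriod f 0 ∈ n.properDivisors :=
        Nat.mem_properDivisors.mpr ⟨hdvd, hlt⟩
      apply h2
      refine (hQaeval c).mpr ⟨_, hmem, ?_⟩
      rw [gP_aeval c _]
      exact Function.iterate_minimalPeriod
  -- the exceptional set
  set S : Finset ℂ := ((P.map (algebraMap ℚ ℂ)).roots.toFinset).filter
    (fun α => Polynomial.aeval α Q ≠ 0) with hS
  have hmapne : P.map (algebraMap ℚ ℂ) ≠ 0 :=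
    (Polynomial.map_ne_zero_iff (algebraMap ℚ ℂ).injective).mpr hPne
  have hSmem : ∀ α : ℂ, α ∈ S ↔ (Polynomial.aeval α P = 0 ∧ Polynomial.aeval α Q ≠ 0) := by
    intro α
    rw [hS, Finset.mem_filter, Multiset.mem_toFinset,
      Polynomial.mem_roots_map_of_injective (algebraMap ℚ ℂ).injective hPne,
      ← Polynomial.aeval_def]
  have hSint : ∀ α ∈ S, IsIntegral ℚ α := by
    intro α hα
    exact (IsAlgebraic.isIntegral ⟨P, hPne, ((hSmem α).mp hα).1⟩)
  refine ⟨∏ α ∈ S, minpoly ℚ α, ?_, ?_⟩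
  · rw [Finset.prod_ne_zero_iff]
    intro α hα
    exact minpoly.ne_zero (hSint α hα)
  · intro c
    rw [key c, map_prod, Finset.prod_eq_zero_iff]
    constructor
    · rintro ⟨α, hα, hc⟩
      have hint := hSint α hα
      have hirr := minpoly.irreducible hint
      have hmon := minpoly.monic hint
      have heq : minpoly ℚ α = minpoly ℚ c :=
        minpoly.eq_of_irreducible_of_monic hirr hc hmon
      obtain ⟨h1, h2⟩ := (hSmem α).mp hα
      have hdvdP : minpoly ℚ α ∣ P := minpoly.dvd ℚ α h1
      constructor
      · obtain ⟨r, hr⟩ := hdvdP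
        rw [hr, map_mul, hc, zero_mul]
      · intro hQc
        have hdvdQ : minpoly ℚ c ∣ Q := minpoly.dvd ℚ c hQc
        rw [← heq] at hdvdQ
        obtain ⟨r, hr⟩ := hdvdQ
        apply h2
        rw [hr, map_mul]
        have : Polynomial.aeval α (minpoly ℚ α) = 0 := minpoly.aeval ℚ α
        rw [this, zero_mul]
    · rintro ⟨h1, h2⟩
      have hcS : c ∈ S := (hSmem c).mpr ⟨h1, h2⟩
      exact ⟨c, hcS, minpoly.aeval ℚ c⟩
end
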